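/- arXiv:1602.05937 — 4 statements merged into one kernel-verified Lean document; each statement's English description precedes it below -/
import Mathlib

section
/- For every connected graph F there exists a constant C = C(F) > 0 such that for every admissible pair (G,d) with d > 1 and v(G) ≥ 1, one has |t(F,G,d) − t_inj(F,G,d)| ≤ C/d. -/
open Filter Topology

noncomputable def homCount {α β : Type*} (F : SimpleGraph α) (G : SimpleGraph β) : ℕ :=
  Nat.card (F →g G)

noncomputable def injCount {α β : Type*} (F : SimpleGraph α) (G : SimpleGraph β) : ℕ :=
  Nat.card {f : F →g G // Function.Injective f}

noncomputable def vdegree {α : Type*} (G : SimpleGraph α) (x : α) : ℕ :=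
  Nat.card (G.neighborSet x)

noncomputable def edgeCount {α : Type*} (G : SimpleGraph α) : ℕ := Nat.card G.edgeSet

noncomputable def numComponents {α : Type*} (F : SimpleGraph α) : ℕ :=
  Nat.card F.ConnectedComponent

noncomputable def numBigComponents {α : Type*} (F : SimpleGraph α) : ℕ :=
  Nat.card {c : F.ConnectedComponent // 2 ≤ Nat.card c.supp}

def Admissible {α : Type*} (G : SimpleGraph α) (d : ℝ) : Prop :=
  1 ≤ d ∧ ∀ x : α, (vdegree G x : ℝ) ≤ d

noncomputable def homDensity {α β : Type*} (F : SimpleGraph α) (G : SimpleGraph β) (d : ℝ) : ℝ :=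
  (homCount F G : ℝ) /
    ((Nat.card β : ℝ) ^ numComponents F * d ^ (Nat.card α - numComponents F))

noncomputable def injDensity {α β : Type*} (F : SimpleGraph α) (G : SimpleGraph β) (d : ℝ) : ℝ :=
  (injCount F G : ℝ) /
    ((Nat.card β : ℝ) ^ numComponents F * d ^ numBigComponents F *
      (d - 1) ^ (Nat.card α - numComponents F - numBigComponents F))

/-!
Order the vertices of `F` as `0, 1, …, v(F) - 1` so that every vertex `i > 0` has an earlier
neighbour `p i` (sort by distance from a root). A homomorphism `F → G` is then chosen vertex by
vertex: `v(G)` choices for the image of `0` and at most `d` for each later vertex, which must go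
to a neighbour of the image of its parent. For an injective one, each vertex `i ≥ 2` must moreover
avoid the image of a second earlier neighbour of `p i`, so `inj(F,G) ≤ v(G) d (d-1)^(v(F)-2)`,
i.e. `t_inj ≤ 1`; prescribing a coincidence `g a = g b` removes the choice at `b`, so
`hom(F,G) - inj(F,G) ≤ v(F)^2 v(G) d^(v(F)-2)`. Together with Bernoulli's inequality
`(1 - 1/d)^k ≥ 1 - k/d` this gives `|t - t_inj| ≤ (v(F)^2 + v(F)) / d`.
-/

open Finset

theorem card_le_prod_of_sequential_bound {V : Type*} [DecidableEq V] {n : ℕ}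
    (A : Fin n → (Fin n → V) → Finset V) (c : Fin n → ℝ)
    (hA : ∀ j g g', (∀ i < j, g i = g' i) → A j g = A j g') (hc0 : ∀ j, 0 ≤ c j)
    (hc : ∀ g j, (∀ i < j, g i ∈ A i g) → (#(A j g) : ℝ) ≤ c j)
    {s : Finset (Fin n → V)} (hs : ∀ g ∈ s, ∀ j, g j ∈ A j g) :
    (#s : ℝ) ≤ ∏ j, c j := by
  induction n with
  | zero => simpa using card_le_one_of_subsingleton s
  | succ n ih =>
    rcases s.eq_empty_or_nonempty with rfl | ⟨g₀, hg₀⟩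
    · simpa using prod_nonneg fun j _ => hc0 j
    have hA₀ : ∀ g, A 0 g = A 0 g₀ := fun g =>
      hA 0 g g₀ fun i hi => absurd hi (Fin.not_lt_zero i)
    have hfiber : ∀ v ∈ A 0 g₀, (#{g ∈ s | g 0 = v} : ℝ) ≤ ∏ j : Fin n, c j.succ := by
      intro v hv
      rw [← card_image_of_injOn (f := Fin.tail) fun g hg g' hg' h => by
        rw [← Fin.cons_self_tail g, ← Fin.cons_self_tail g', h,
          (mem_filter.1 hg).2, (mem_filter.1 hg').2]]
      refine ih (fun j t => A j.succ (Fin.cons v t)) _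
        (fun j t t' h => hA _ _ _ fun i hi => ?_) (fun j => hc0 _)
        (fun t j ht => hc _ _ fun i hi => ?_) ?_
      · cases i using Fin.cases with
        | zero => rfl
        | succ i => exact h i (Fin.succ_lt_succ_iff.1 hi)
      · cases i using Fin.cases with
        | zero => simpa [hA₀] using hv
        | succ i => exact ht i (Fin.succ_lt_succ_iff.1 hi)
      · simp only [mem_image, mem_filter]
        rintro _ ⟨g, ⟨hg, rfl⟩, rfl⟩ j
        simpa [Fin.tail] using hs g hg j.succ
    calc (#s : ℝ) = ∑ v ∈ A 0 g₀, (#{g ∈ s | g 0 = v} : ℝ) := by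
          rw [card_eq_sum_card_fiberwise fun g hg => hA₀ g ▸ hs g hg 0]
          push_cast
          rfl
      _ ≤ ∑ _v ∈ A 0 g₀, ∏ j : Fin n, c j.succ := sum_le_sum hfiber
      _ ≤ c 0 * ∏ j : Fin n, c j.succ := by
          rw [sum_const, nsmul_eq_mul]
          exact mul_le_mul_of_nonneg_right (hc g₀ 0 fun i hi => absurd hi (Fin.not_lt_zero i))
            (prod_nonneg fun j _ => hc0 _)
      _ = ∏ j, c j := (Fin.prod_univ_succ c).symm

lemma prod_ite_eq_else_const {n : ℕ} (b : Fin (n + 1)) (d : ℝ) :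
    ∏ j, (if j = b then 1 else d) = d ^ n := by
  rw [prod_ite, prod_const_one, one_mul, prod_const, filter_ne', card_erase_of_mem (mem_univ _)]
  simp

section ParentTree

variable {β : Type*} [Fintype β] {G : SimpleGraph β} [DecidableRel G.Adj] {d : ℝ} {n : ℕ}

variable (G) in
def parentNbhd (p : Fin (n + 1) → Fin (n + 1)) (j : Fin (n + 1)) (g : Fin (n + 1) → β) :
    Finset β :=
  if j = 0 then univ else G.neighborFinset (g (p j))

variable {p : Fin (n + 1) → Fin (n + 1)}

lemma parentNbhd_congr (hp : ∀ i, i ≠ 0 → p i < i) {j : Fin (n + 1)}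
    {g g' : Fin (n + 1) → β} (h : ∀ i < j, g i = g' i) :
    parentNbhd G p j g = parentNbhd G p j g' := by
  unfold parentNbhd
  split_ifs with hj
  · rfl
  · rw [h _ (hp j hj)]

lemma mem_parentNbhd {g : Fin (n + 1) → β} (hg : ∀ i, i ≠ 0 → G.Adj (g (p i)) (g i))
    (j : Fin (n + 1)) : g j ∈ parentNbhd G p j g := by
  unfold parentNbhd
  split_ifs with hj
  · exact mem_univ _
  · exact (G.mem_neighborFinset _ _).2 (hg j hj)

lemma card_parentNbhd_le (hdeg : ∀ x, (G.degree x : ℝ) ≤ d) (j : Fin (n + 1))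
    (g : Fin (n + 1) → β) :
    (#(parentNbhd G p j g) : ℝ) ≤ if j = 0 then (Fintype.card β : ℝ) else d := by
  unfold parentNbhd
  split_ifs
  · simp
  · simpa using hdeg _

lemma card_parentNbhd_sdiff_image_le [DecidableEq β] (hdeg : ∀ x, (G.degree x : ℝ) ≤ d)
    {j k : Fin (n + 1)} (hj : j ≠ 0) (hkj : k < j) {g : Fin (n + 1) → β}
    (hk : G.Adj (g (p j)) (g k)) :
    (#(parentNbhd G p j g \ (Iio j).image g) : ℝ) ≤ d - 1 := by
  have hlt : #(parentNbhd G p j g \ (Iio j).image g) < #(parentNbhd G p j g) :=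
    card_lt_card ⟨sdiff_subset, fun h => (mem_sdiff.1 (h (by
      simpa [parentNbhd, hj] using hk))).2 (mem_image_of_mem g (mem_Iio.2 hkj))⟩
  have hN : (#(parentNbhd G p j g) : ℝ) ≤ d := by
    simpa [hj] using card_parentNbhd_le (p := p) hdeg j g
  have : ((#(parentNbhd G p j g \ (Iio j).image g) + 1 : ℕ) : ℝ) ≤ #(parentNbhd G p j g) :=
    Nat.cast_le.2 hlt
  push_cast at this
  linarith

end ParentTree

-- The second neighbour is the parent of `p j`, or vertex `1` when `p j` is the root.
lemma exists_lt_adj_parent {β : Type*} {G : SimpleGraph β} {n : ℕ}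
    {p : Fin (n + 2) → Fin (n + 2)} (hp : ∀ i, i ≠ 0 → p i < i) {g : Fin (n + 2) → β}
    {j : Fin (n + 2)} (hj0 : j ≠ 0) (hj1 : j ≠ 1)
    (hadj : ∀ i < j, i ≠ 0 → G.Adj (g (p i)) (g i)) : ∃ k < j, G.Adj (g (p j)) (g k) := by
  by_cases hpj : p j = 0
  · have h1j : 1 < j := by
      have h0 := Fin.val_ne_of_ne hj0
      have h1 := Fin.val_ne_of_ne hj1
      rw [Fin.val_zero] at h0
      rw [Fin.val_one] at h1
      rw [Fin.lt_def, Fin.val_one]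
      omega
    have hp1 : p 1 = 0 := (Fin.lt_one_iff _).1 (hp 1 one_ne_zero)
    exact ⟨1, h1j, by simpa [hpj, hp1] using hadj 1 h1j one_ne_zero⟩
  · exact ⟨p (p j), (hp _ hpj).trans (hp j hj0), (hadj _ (hp j hj0) hpj).symm⟩

section TreeMaps

variable {β : Type*} [Fintype β] [DecidableEq β] {G : SimpleGraph β} [DecidableRel G.Adj]
  {d : ℝ} {n : ℕ} {p : Fin (n + 2) → Fin (n + 2)} {s : Finset (Fin (n + 2) → β)}

theorem card_le_of_injective_of_forall_adj_parent (hp : ∀ i, i ≠ 0 → p i < i)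
    (hdeg : ∀ x, (G.degree x : ℝ) ≤ d) (hd : 1 ≤ d)
    (hs : ∀ g ∈ s, ∀ i, i ≠ 0 → G.Adj (g (p i)) (g i))
    (hinj : ∀ g ∈ s, Function.Injective g) :
    (#s : ℝ) ≤ Fintype.card β * d * (d - 1) ^ n := by
  set c : Fin (n + 2) → ℝ := fun j =>
    if j = 0 then Fintype.card β else if j = 1 then d else d - 1
  have hprod : ∏ j, c j = Fintype.card β * d * (d - 1) ^ n := by
    simp [c, Fin.prod_univ_succ, Fin.succ_ne_zero, Fin.succ_succ_ne_one, mul_assoc]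
  rw [← hprod]
  refine card_le_prod_of_sequential_bound (fun j g => parentNbhd G p j g \ (Iio j).image g) c
    (fun j g g' h => ?_) (fun j => by unfold c; split_ifs <;> positivity)
    (fun g j hpre => ?_) (fun g hg j => ?_)
  · rw [parentNbhd_congr hp h, image_congr fun i hi => h i (mem_Iio.1 hi)]
  · by_cases hj : j = 0 ∨ j = 1
    · calc (#(parentNbhd G p j g \ (Iio j).image g) : ℝ) ≤ #(parentNbhd G p j g) := by
            gcongr
            exact sdiff_subset
        _ ≤ if j = 0 then (Fintype.card β : ℝ) else d := card_parentNbhd_le hdeg j g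
        _ = c j := by rcases hj with rfl | rfl <;> simp [c]
    · obtain ⟨hj0, hj1⟩ := not_or.1 hj
      obtain ⟨k, hkj, hk⟩ := exists_lt_adj_parent hp hj0 hj1 fun i hi hi0 => by
        simpa [parentNbhd, hi0] using (mem_sdiff.1 (hpre i hi)).1
      simpa [c, hj0, hj1] using card_parentNbhd_sdiff_image_le hdeg hj0 hkj hk
  · refine mem_sdiff.2 ⟨mem_parentNbhd (hs g hg) j, ?_⟩
    simp only [mem_image, mem_Iio, not_exists, not_and]
    exact fun i hi hgi => hi.ne (hinj g hg hgi)

theorem card_le_of_eq_of_forall_adj_parent (hp : ∀ i, i ≠ 0 → p i < i)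
    (hdeg : ∀ x, (G.degree x : ℝ) ≤ d) (hd : 0 ≤ d) {a b : Fin (n + 2)} (hab : a < b)
    (hs : ∀ g ∈ s, ∀ i, i ≠ 0 → G.Adj (g (p i)) (g i)) (heq : ∀ g ∈ s, g a = g b) :
    (#s : ℝ) ≤ Fintype.card β * d ^ n := by
  obtain ⟨b, rfl⟩ := Fin.exists_succ_eq.2 (Fin.ne_zero_of_lt hab)
  set c : Fin (n + 2) → ℝ := fun j =>
    if j = b.succ then 1 else if j = 0 then Fintype.card β else d
  have hprod : ∏ j, c j = Fintype.card β * d ^ n := by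
    rw [Fin.prod_univ_succ]
    simp [c, (Fin.succ_ne_zero b).symm, prod_ite_eq_else_const]
  rw [← hprod]
  refine card_le_prod_of_sequential_bound
    (fun j g => if j = b.succ then {g a} else parentNbhd G p j g) c
    (fun j g g' h => ?_) (fun j => by unfold c; split_ifs <;> positivity)
    (fun g j _ => ?_) (fun g hg j => ?_)
  · split_ifs with hj
    · rw [h a (hj ▸ hab)]
    · exact parentNbhd_congr hp h
  · by_cases hj : j = b.succ
    · simp [c, hj]
    · simpa only [c, if_neg hj] using card_parentNbhd_le hdeg j g
  · split_ifs with hj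
    · simp [hj, heq g hg]
    · exact mem_parentNbhd (hs g hg) j

end TreeMaps

namespace SimpleGraph

variable {α : Type*} {F : SimpleGraph α}

theorem Connected.exists_adj_dist_lt (hF : F.Connected) {x v : α} (hx : x ≠ v) :
    ∃ y, F.Adj x y ∧ F.dist y v < F.dist x v := by
  obtain ⟨w, hw⟩ := hF.exists_walk_length_eq_dist x v
  cases w with
  | nil => exact absurd rfl hx
  | cons hxy q =>
    refine ⟨_, hxy, ?_⟩
    rw [← hw, Walk.length_cons]
    exact Nat.lt_succ_of_le (dist_le q)

theorem Connected.exists_equiv_fin_parent [Fintype α] (hF : F.Connected) {n : ℕ}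
    (hn : Fintype.card α = n + 1) :
    ∃ (e : Fin (n + 1) ≃ α) (p : Fin (n + 1) → Fin (n + 1)),
      ∀ i, i ≠ 0 → p i < i ∧ F.Adj (e (p i)) (e i) := by
  set e₀ := (Fintype.equivFinOfCardEq hn).symm
  set v := e₀ 0
  set e := (Tuple.sort fun i => F.dist (e₀ i) v).trans e₀
  have hmono : Monotone fun i => F.dist (e i) v := Tuple.monotone_sort fun i => F.dist (e₀ i) v
  suffices h : ∀ i, i ≠ 0 → ∃ j < i, F.Adj (e j) (e i) by
    choose! p hp using h
    exact ⟨e, p, hp⟩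
  intro i hi
  have hiv : e i ≠ v := fun h => by
    have h0 : e 0 = v := by
      rw [← (hF.preconnected _ _).dist_eq_zero_iff, ← Nat.le_zero]
      simpa [h] using hmono (Fin.zero_le i)
    exact hi (e.injective (h.trans h0.symm))
  obtain ⟨y, hadj, hlt⟩ := hF.exists_adj_dist_lt hiv
  refine ⟨e.symm y, ?_, by simpa using hadj.symm⟩
  by_contra! hle
  have := hmono hle
  simp only [Equiv.apply_symm_apply] at this
  omega

end SimpleGraph

section Components

variable {α : Type*} {F : SimpleGraph α}

lemma numComponents_eq_one (hF : F.Connected) : numComponents F = 1 := by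
  have := hF.preconnected.subsingleton_connectedComponent
  have := hF.nonempty
  exact Nat.card_unique

lemma numBigComponents_eq_zero [Subsingleton α] : numBigComponents F = 0 := by
  have : IsEmpty {c : F.ConnectedComponent // 2 ≤ Nat.card c.supp} := ⟨fun ⟨c, hc⟩ => by
    have : Nat.card c.supp ≤ 1 := Finite.card_le_one_iff_subsingleton.2 inferInstance
    omega⟩
  exact Nat.card_of_isEmpty

lemma numBigComponents_eq_one [Finite α] [Nontrivial α] (hF : F.Connected) :
    numBigComponents F = 1 := by
  have := hF.preconnected.subsingleton_connectedComponent
  obtain ⟨v⟩ := hF.nonempty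
  have hsupp : (F.connectedComponentMk v).supp = Set.univ :=
    Set.eq_univ_of_forall fun w => SimpleGraph.ConnectedComponent.sound (hF.preconnected w v)
  have : Unique {c : F.ConnectedComponent // 2 ≤ Nat.card c.supp} :=
    { default := ⟨_, by rw [hsupp, Nat.card_univ]; exact Finite.one_lt_card⟩
      uniq := fun _ => Subtype.ext (Subsingleton.elim _ _) }
  exact Nat.card_unique

end Components

section HomCount

variable {α α' β : Type*} {F : SimpleGraph α} {F' : SimpleGraph α'} (G : SimpleGraph β)

lemma homCount_congr (e : F ≃g F') : homCount F G = homCount F' G :=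
  Nat.card_congr (e.homCongr .refl)

lemma injCount_congr (e : F ≃g F') : injCount F G = injCount F' G :=
  Nat.card_congr <| (e.homCongr .refl).subtypeEquiv fun f => by
    simp [SimpleGraph.Iso.homCongr, RelIso.relHomCongr]

lemma injCount_eq_homCount [Subsingleton α] : injCount F G = homCount F G :=
  Nat.card_congr <| Equiv.subtypeUnivEquiv fun _ => Function.injective_of_subsingleton _

lemma injCount_le_homCount [Finite α] [Finite β] : injCount F G ≤ homCount F G :=
  Finite.card_subtype_le _

def homEquivSubtype :
    (F →g G) ≃ {g : α → β // ∀ a b, F.Adj a b → G.Adj (g a) (g b)} where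
  toFun f := ⟨f, fun _ _ => f.map_adj⟩
  invFun g := ⟨g.1, g.2 _ _⟩
  left_inv _ := rfl
  right_inv _ := rfl

variable [Fintype α] [DecidableEq α] [Fintype β] [DecidableRel F.Adj] [DecidableRel G.Adj]

variable (F) in
def homFinset : Finset (α → β) := {g | ∀ a b, F.Adj a b → G.Adj (g a) (g b)}

@[simp]
lemma mem_homFinset {g : α → β} :
    g ∈ homFinset F G ↔ ∀ a b, F.Adj a b → G.Adj (g a) (g b) := by
  simp [homFinset]

lemma homCount_eq_card_homFinset : homCount F G = #(homFinset F G) := by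
  rw [homCount, Nat.card_congr (homEquivSubtype G), Nat.card_eq_fintype_card,
    Fintype.card_subtype, homFinset]

lemma injCount_eq_card_filter_injective [DecidableEq β] :
    injCount F G = #{g ∈ homFinset F G | Function.Injective g} := by
  rw [injCount, Nat.card_congr (((homEquivSubtype G).subtypeEquiv
      (p := fun f : F →g G => Function.Injective f)
      (q := fun g => Function.Injective g.1)
      fun _ => Iff.rfl).trans
      (Equiv.subtypeSubtypeEquivSubtypeInter _ fun g : α → β => Function.Injective g)),
    Nat.card_eq_fintype_card, Fintype.card_subtype, homFinset, filter_filter]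

end HomCount

lemma vdegree_eq_degree {β : Type*} (G : SimpleGraph β) (x : β) [Fintype (G.neighborSet x)] :
    vdegree G x = G.degree x := by
  rw [vdegree, Nat.card_eq_fintype_card, SimpleGraph.card_neighborSet_eq_degree]

section HomBounds

variable {β : Type*} [Fintype β] [DecidableEq β] {G : SimpleGraph β} [DecidableRel G.Adj]
  {d : ℝ} {n : ℕ} {F : SimpleGraph (Fin (n + 2))} {p : Fin (n + 2) → Fin (n + 2)}

theorem injCount_le_of_adj_parent (hp : ∀ i, i ≠ 0 → p i < i ∧ F.Adj (p i) i)
    (hdeg : ∀ x, (G.degree x : ℝ) ≤ d) (hd : 1 ≤ d) :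
    (injCount F G : ℝ) ≤ Fintype.card β * d * (d - 1) ^ n := by
  classical
  rw [injCount_eq_card_filter_injective]
  refine card_le_of_injective_of_forall_adj_parent (fun i hi => (hp i hi).1) hdeg hd
    (fun g hg i hi => ?_) fun g hg => (mem_filter.1 hg).2
  exact (mem_homFinset G).1 (mem_filter.1 hg).1 _ _ (hp i hi).2

theorem homCount_sub_injCount_le_of_adj_parent (hp : ∀ i, i ≠ 0 → p i < i ∧ F.Adj (p i) i)
    (hdeg : ∀ x, (G.degree x : ℝ) ≤ d) (hd : 0 ≤ d) :
    (homCount F G : ℝ) - injCount F G ≤ (n + 2) ^ 2 * (Fintype.card β * d ^ n) := by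
  classical
  set H := homFinset F G
  set P := (univ : Finset (Fin (n + 2) × Fin (n + 2))).filter fun q => q.1 < q.2
  have hsub :
      {g ∈ H | ¬ Function.Injective g} ⊆ P.biUnion fun q => {g ∈ H | g q.1 = g q.2} := by
    intro g hg
    obtain ⟨hgH, hg⟩ := mem_filter.1 hg
    obtain ⟨a, b, hab, hne⟩ := Function.not_injective_iff.1 hg
    rcases hne.lt_or_gt with h | h
    · exact mem_biUnion.2 ⟨(a, b), by simp [P, h], mem_filter.2 ⟨hgH, hab⟩⟩
    · exact mem_biUnion.2 ⟨(b, a), by simp [P, h], mem_filter.2 ⟨hgH, hab.symm⟩⟩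
  have hP : (#P : ℝ) ≤ (n + 2) ^ 2 := by
    exact_mod_cast (card_filter_le _ _).trans (by simp [sq])
  calc (homCount F G : ℝ) - injCount F G = #{g ∈ H | ¬ Function.Injective g} := by
        rw [homCount_eq_card_homFinset, injCount_eq_card_filter_injective,
          ← card_filter_add_card_filter_not (s := H) (p := Function.Injective)]
        push_cast
        ring
    _ ≤ ∑ q ∈ P, (#{g ∈ H | g q.1 = g q.2} : ℝ) := by
        exact_mod_cast (card_le_card hsub).trans card_biUnion_le
    _ ≤ ∑ q ∈ P, (Fintype.card β * d ^ n : ℝ) := sum_le_sum fun q hq =>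
        card_le_of_eq_of_forall_adj_parent (fun i hi => (hp i hi).1) hdeg hd (mem_filter.1 hq).2
          (fun g hg i hi => (mem_homFinset G).1 (mem_filter.1 hg).1 _ _ (hp i hi).2)
          fun g hg => (mem_filter.1 hg).2
    _ ≤ (n + 2) ^ 2 * (Fintype.card β * d ^ n) := by
        rw [sum_const, nsmul_eq_mul]
        gcongr

end HomBounds

lemma one_sub_one_sub_inv_pow_le {d : ℝ} (hd : 1 ≤ d) (k : ℕ) :
    1 - (1 - d⁻¹) ^ k ≤ k / d := by
  have := one_add_mul_le_pow (a := -d⁻¹) (by linarith [inv_le_one_of_one_le₀ hd]) k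
  rw [← sub_eq_add_neg, mul_neg] at this
  rw [div_eq_mul_inv]
  linarith

lemma abs_div_sub_div_le {M d h i N : ℝ} {k : ℕ} (hM : 0 < M) (hd : 1 < d) (hi0 : 0 ≤ i)
    (hih : i ≤ h) (hi : i ≤ M * d * (d - 1) ^ k) (hhi : h - i ≤ N * (M * d ^ k)) :
    |h / (M * d ^ (k + 1)) - i / (M * d * (d - 1) ^ k)| ≤ (N + k) / d := by
  have hd0 : 0 < d := by linarith
  have hu : 0 < (d - 1) ^ k := pow_pos (by linarith) k
  have hv : 0 < d ^ k := pow_pos hd0 k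
  have hN : 0 ≤ N := nonneg_of_mul_nonneg_left (by linarith) (mul_pos hM hv)
  set t := i / (M * d * (d - 1) ^ k) with ht
  have ht0 : 0 ≤ t := by positivity
  have ht1 : t ≤ 1 := (div_le_one (by positivity)).2 hi
  have hratio : (d - 1) ^ k / d ^ k = (1 - d⁻¹) ^ k := by
    rw [← div_pow, sub_div, div_self hd0.ne', one_div]
  have hit : i / (M * d ^ (k + 1)) = t * (1 - d⁻¹) ^ k := by
    rw [← hratio, pow_succ, ht]
    field_simp
  have hr : 0 ≤ (1 - d⁻¹) ^ k := by rw [← hratio]; positivity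
  have hr1 : (1 - d⁻¹) ^ k ≤ 1 := by rw [← hratio, div_le_one hv]; gcongr; linarith
  have hhi' : (h - i) / (M * d ^ (k + 1)) ≤ N / d := by
    rw [div_le_div_iff₀ (by positivity) hd0, pow_succ]
    nlinarith
  rw [abs_sub_le_iff]
  constructor
  · calc h / (M * d ^ (k + 1)) - t ≤ h / (M * d ^ (k + 1)) - t * (1 - d⁻¹) ^ k := by
          nlinarith
      _ = (h - i) / (M * d ^ (k + 1)) := by rw [sub_div, hit]
      _ ≤ (N + k) / d := hhi'.trans (by gcongr; linarith)
  · calc t - h / (M * d ^ (k + 1)) ≤ t - t * (1 - d⁻¹) ^ k := by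
          rw [← hit]
          gcongr
      _ ≤ 1 - (1 - d⁻¹) ^ k := by nlinarith
      _ ≤ (N + k) / d := (one_sub_one_sub_inv_pow_le hd.le k).trans (by gcongr; linarith)

lemma homDensity_eq_injDensity_of_subsingleton {α β : Type*} [Subsingleton α]
    {F : SimpleGraph α} (hF : F.Connected) (G : SimpleGraph β) (d : ℝ) :
    homDensity F G d = injDensity F G d := by
  have : Unique α := uniqueOfSubsingleton hF.nonempty.some
  simp [homDensity, injDensity, injCount_eq_homCount, numComponents_eq_one hF,
    numBigComponents_eq_zero]

/-- For every connected graph `F` there is a constant `C > 0` such that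
for every admissible pair `(G, d)` with `d > 1` and at least one vertex,
`|t(F,G,d) - t_inj(F,G,d)| ≤ C / d`. -/
theorem stmt1 {α : Type*} [Fintype α] (F : SimpleGraph α) (hF : F.Connected) :
    ∃ C : ℝ, 0 < C ∧ ∀ (m : ℕ) (G : SimpleGraph (Fin m)) (d : ℝ),
      Admissible G d → 1 < d → 1 ≤ m →
      |homDensity F G d - injDensity F G d| ≤ C / d := by
  classical
  have : Nonempty α := hF.nonempty
  refine ⟨(Fintype.card α : ℝ) ^ 2 + Fintype.card α, by positivity,
    fun m G d hG hd hm => ?_⟩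
  rcases subsingleton_or_nontrivial α with hα | hα
  · rw [homDensity_eq_injDensity_of_subsingleton hF, sub_self, abs_zero]
    positivity
  obtain ⟨k, hk⟩ : ∃ k, Fintype.card α = k + 2 :=
    ⟨Fintype.card α - 2, by have := Fintype.one_lt_card (α := α); omega⟩
  obtain ⟨e, p, hp⟩ := hF.exists_equiv_fin_parent hk
  have hdeg : ∀ x, (G.degree x : ℝ) ≤ d := fun x => by simpa [vdegree_eq_degree] using hG.2 x
  have hiso := SimpleGraph.Iso.comap e F
  rw [homDensity, injDensity, numComponents_eq_one hF, numBigComponents_eq_one hF,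
    Nat.card_eq_fintype_card (α := α), hk, Nat.card_fin, ← homCount_congr G hiso,
    ← injCount_congr G hiso, show k + 2 - 1 = k + 1 by omega, Nat.add_sub_cancel,
    pow_one, pow_one]
  refine (abs_div_sub_div_le (N := (k + 2) ^ 2) (by exact_mod_cast hm) hd (by positivity)
    (Nat.cast_le.2 (injCount_le_homCount G))
    (by simpa using injCount_le_of_adj_parent (G := G) hp hdeg hd.le)
    (by simpa using homCount_sub_injCount_le_of_adj_parent (G := G) hp hdeg (by positivity))
    ).trans ?_
  gcongr ?_ / d
  push_cast
  nlinarith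
end

section
/- Let (Γ,δ) be an admissible pair with at least one vertex, and let α = 2e(Γ)/(v(Γ)·δ) be its normalized average degree. For each n, let Γ^{□n} be the n-fold Cartesian sum of Γ, i.e., the graph on vertex set V(Γ)^n in which two n-tuples are adjacent if and only if they differ in exactly one coordinate and in that coordinate the two entries are adjacent in Γ. Then the sequence (Γ^{□n}, nδ) is α-regular: for every ε > 0, the proportion of vertices x of Γ^{□n} with |deg(x)/(nδ) − α| ≥ ε tends to 0 as n → ∞. -/
open Filter Topology

/-- The `n`-fold Cartesian sum (box power) of a graph: two `n`-tuples are adjacent iff they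
differ in exactly one coordinate, and in that coordinate the entries are adjacent. -/
def boxPow {V : Type*} (G : SimpleGraph V) (n : ℕ) : SimpleGraph (Fin n → V) where
  Adj x y := ∃ i, G.Adj (x i) (y i) ∧ ∀ j, j ≠ i → x j = y j
  symm := by
    constructor
    rintro x y ⟨i, hadj, hj⟩
    exact ⟨i, hadj.symm, fun j hji => (hj j hji).symm⟩
  loopless := by
    constructor
    rintro x ⟨i, hadj, -⟩
    exact G.irrefl hadj

/-! The degree of `x` in `Γ^{□n}` is the sum of the degrees of its coordinates, so
`deg x / (nδ) - α` is the average of the values `f (x i)`, where `f v = deg v / δ - α` has mean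
zero over `V` by the handshake lemma. For `x` uniform on `V^n` the coordinates are independent,
so the cross terms of the second moment of `∑ i, f (x i)` vanish; the variance of the average is
thus `𝔼 f² / n`, and Chebyshev's inequality bounds the proportion of bad vertices by `𝔼 f² / (nε²)`.
-/

open Finset

section

variable {ι V R : Type*} [Fintype ι] [DecidableEq ι] [Fintype V]

theorem Fintype.sum_comp_eval [CommSemiring R] (g : V → R) (i : ι) :
    ∑ x : ι → V, g (x i) = Fintype.card V ^ (Fintype.card ι - 1) * ∑ v, g v := by
  rw [← (Equiv.funSplitAt i V).symm.sum_comp, Fintype.sum_prod_type]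
  simp [Finset.mul_sum]

theorem Fintype.sum_comp_eval_mul_comp_eval_of_ne [CommSemiring R] (g h : V → R) {i j : ι}
    (hij : i ≠ j) :
    ∑ x : ι → V, g (x i) * h (x j) =
      Fintype.card V ^ (Fintype.card ι - 2) * ((∑ v, g v) * ∑ v, h v) := by
  rw [← (Equiv.funSplitAt i V).symm.sum_comp, Fintype.sum_prod_type]
  simp only [Equiv.funSplitAt_symm_apply, dif_pos, dif_neg hij.symm]
  simp_rw [← Finset.mul_sum]
  simp only [ne_eq, Fintype.sum_comp_eval h (⟨j, hij.symm⟩ : {k // k ≠ i}),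
    Fintype.card_subtype_compl, Fintype.card_unique, Nat.sub_sub, Nat.reduceAdd, ← sum_mul]
  ring

theorem Fintype.sum_sq_sum_comp_eval [CommRing R] (f : V → R) (hf : ∑ v, f v = 0) :
    ∑ x : ι → V, (∑ i, f (x i)) ^ 2 =
      Fintype.card ι * Fintype.card V ^ (Fintype.card ι - 1) * ∑ v, f v ^ 2 := by
  have hdiag (i : ι) : ∑ j, ∑ x : ι → V, f (x i) * f (x j) = ∑ x : ι → V, f (x i) ^ 2 := by
    rw [Finset.sum_eq_single i (fun j _ hji => by
      rw [Fintype.sum_comp_eval_mul_comp_eval_of_ne f f hji.symm, hf]; ring) (by simp)]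
    simp_rw [sq]
  calc ∑ x : ι → V, (∑ i, f (x i)) ^ 2
      = ∑ i, ∑ j, ∑ x : ι → V, f (x i) * f (x j) := by
        simp_rw [sq, Finset.sum_mul_sum]
        rw [Finset.sum_comm]
        exact Finset.sum_congr rfl fun i _ => Finset.sum_comm
    _ = Fintype.card ι * Fintype.card V ^ (Fintype.card ι - 1) * ∑ v, f v ^ 2 := by
        simp [hdiag, Fintype.sum_comp_eval (fun v => f v ^ 2), mul_assoc]

theorem Finset.card_filter_le_abs_le_sum_sq_div {α : Type*} (s : Finset α) (g : α → ℝ)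
    {c : ℝ} (hc : 0 < c) :
    (#{x ∈ s | c ≤ |g x|} : ℝ) ≤ (∑ x ∈ s, g x ^ 2) / c ^ 2 := by
  rw [le_div_iff₀ (by positivity)]
  calc (#{x ∈ s | c ≤ |g x|} : ℝ) * c ^ 2 = ∑ x ∈ s with c ≤ |g x|, c ^ 2 := by
        rw [Finset.sum_const, nsmul_eq_mul]
    _ ≤ ∑ x ∈ s with c ≤ |g x|, g x ^ 2 :=
        Finset.sum_le_sum fun x hx => by
          rw [← sq_abs (g x)]
          exact pow_le_pow_left₀ hc.le (Finset.mem_filter.1 hx).2 2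
    _ ≤ ∑ x ∈ s, g x ^ 2 :=
        Finset.sum_le_sum_of_subset_of_nonneg (Finset.filter_subset _ _)
          fun x _ _ => sq_nonneg _

theorem Fintype.card_filter_le_abs_average_div_le [Nonempty ι] [Nonempty V] (f : V → ℝ)
    (hf : ∑ v, f v = 0) {ε : ℝ} (hε : 0 < ε) :
    (#{x : ι → V | ε ≤ |(∑ i, f (x i)) / Fintype.card ι|} : ℝ) /
        Fintype.card V ^ Fintype.card ι ≤
      (∑ v, f v ^ 2) / (ε ^ 2 * Fintype.card V) / Fintype.card ι := by
  have hι : (0 : ℝ) < Fintype.card ι := by exact_mod_cast Fintype.card_pos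
  have hV : (0 : ℝ) < Fintype.card V := by exact_mod_cast Fintype.card_pos
  have hfilter : ({x : ι → V | ε ≤ |(∑ i, f (x i)) / Fintype.card ι|} : Finset (ι → V)) =
      ({x : ι → V | Fintype.card ι * ε ≤ |∑ i, f (x i)|} : Finset (ι → V)) := by
    simp_rw [abs_div, Nat.abs_cast, le_div_iff₀ hι, mul_comm ε]
  have hcheb := Finset.card_filter_le_abs_le_sum_sq_div univ
    (fun x : ι → V => ∑ i, f (x i)) (mul_pos hι hε)
  rw [Fintype.sum_sq_sum_comp_eval f hf] at hcheb
  rw [hfilter, div_le_iff₀ (by positivity)]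
  refine hcheb.trans_eq ?_
  obtain ⟨k, hk⟩ : ∃ k, Fintype.card ι = k + 1 :=
    Nat.exists_eq_succ_of_ne_zero Fintype.card_ne_zero
  rw [hk] at hι ⊢
  field_simp
  push_cast
  ring

end

namespace SimpleGraph

variable {V : Type*}

theorem sum_vdegree_eq_two_mul_edgeCount [Fintype V] (G : SimpleGraph V) :
    ∑ v, vdegree G v = 2 * edgeCount G := by
  classical
  simp only [vdegree, edgeCount, Nat.card_eq_fintype_card, card_neighborSet_eq_degree,
    sum_degrees_eq_twice_card_edges, edgeFinset, Set.toFinset_card]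

noncomputable def boxPowNeighborSetEquiv (G : SimpleGraph V) {n : ℕ} (x : Fin n → V) :
    (Σ i, G.neighborSet (x i)) ≃ (boxPow G n).neighborSet x :=
  Equiv.ofBijective
    (fun p => ⟨Function.update x p.1 p.2, p.1, by rw [Function.update_self]; exact p.2.2,
      fun j hj => by simp [Function.update_of_ne hj]⟩)
    ⟨by
      rintro ⟨i, v, hv⟩ ⟨j, w, hw⟩ h
      have hupd : Function.update x i v = Function.update x j w := congrArg Subtype.val h
      obtain rfl : i = j := by
        by_contra hij
        have := congrFun hupd i
        rw [Function.update_self, Function.update_of_ne hij] at this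
        exact G.irrefl (this ▸ hv)
      obtain rfl : v = w := by simpa using congrFun hupd i
      rfl,
    by
      rintro ⟨y, i, hadj, hy⟩
      refine ⟨⟨i, y i, hadj⟩, Subtype.ext <| funext fun j => ?_⟩
      by_cases hji : j = i
      · subst hji; simp
      · simp [Function.update_of_ne hji, hy j hji]⟩

theorem vdegree_boxPow (G : SimpleGraph V) [G.LocallyFinite] {n : ℕ} (x : Fin n → V) :
    vdegree (boxPow G n) x = ∑ i, vdegree G (x i) := by
  rw [vdegree, ← Nat.card_congr (boxPowNeighborSetEquiv G x), Nat.card_sigma]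
  rfl

end SimpleGraph

/-- If `(Γ, δ)` is admissible with normalized average degree
`α = 2e(Γ)/(v(Γ)·δ)`, then the sequence `(Γ^{□n}, nδ)` is `α`-regular. -/
theorem stmt4 {V : Type*} [Fintype V] [Nonempty V] (Γ : SimpleGraph V) (δ : ℝ)
    (hadm : Admissible Γ δ) (α : ℝ)
    (hα : α = 2 * (edgeCount Γ : ℝ) / ((Nat.card V : ℝ) * δ)) :
    ∀ ε : ℝ, 0 < ε →
      Tendsto (fun n : ℕ =>
          (Nat.card {x : Fin n → V //
              ε ≤ |(vdegree (boxPow Γ n) x : ℝ) / (n * δ) - α|} : ℝ) /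
            (Nat.card (Fin n → V) : ℝ))
        atTop (𝓝 0) := by
  classical
  intro ε hε
  have hδ : δ ≠ 0 := (zero_lt_one.trans_le hadm.1).ne'
  set f : V → ℝ := fun v => vdegree Γ v / δ - α
  have hf : ∑ v, f v = 0 := by
    have hsum : ∑ v, (vdegree Γ v : ℝ) = 2 * edgeCount Γ := by
      exact_mod_cast Γ.sum_vdegree_eq_two_mul_edgeCount
    simp only [f, Finset.sum_sub_distrib, ← Finset.sum_div, hsum, hα, Finset.sum_const,
      Finset.card_univ, nsmul_eq_mul, Nat.card_eq_fintype_card]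
    field_simp
    ring
  have hdev {n : ℕ} (hn : n ≠ 0) (x : Fin n → V) :
      (vdegree (boxPow Γ n) x : ℝ) / (n * δ) - α = (∑ i, f (x i)) / n := by
    simp only [f, Γ.vdegree_boxPow, Finset.sum_sub_distrib, ← Finset.sum_div, Nat.cast_sum,
      Finset.sum_const, Finset.card_univ, Fintype.card_fin, nsmul_eq_mul]
    field_simp
  refine squeeze_zero' (Eventually.of_forall fun n => by positivity)
    (eventually_atTop.2 ⟨1, fun n hn => ?_⟩)
    (tendsto_const_div_atTop_nhds_zero_nat ((∑ v, f v ^ 2) / (ε ^ 2 * Fintype.card V)))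
  have : Nonempty (Fin n) := ⟨⟨0, hn⟩⟩
  have hbound := Fintype.card_filter_le_abs_average_div_le (ι := Fin n) f hf hε
  rw [Fintype.card_fin] at hbound
  convert hbound using 3
  · rw [Nat.card_eq_fintype_card, Fintype.card_subtype]
    simp only [hdev (Nat.one_le_iff_ne_zero.1 hn)]
  · simp [Nat.card_eq_fintype_card]
end

section
/- Let F be a connected graph with n ≥ 1 vertices. An admissible labeling of F is a bijection φ : V(F) → {0,1,…,n−1} such that for every i with 1 ≤ i ≤ n, the set of vertices with labels less than i spans a connected subgraph of F. Two admissible labelings are adjacent if one is obtained from the other by swapping the labels i−1 and i for some i. Then: (a) the graph whose vertices are the admissible labelings of F, with this adjacency, is connected; and (b) for any fixed vertex o of F, the admissible labelings φ with φ(o) = 0 span a connected subgraph of this graph. -/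
/-!
Call an admissible labeling rooted at `r` if it gives `r` the label `0`. If `w` has label `j + 1`
and a neighbour labelled below `j`, swapping the labels `j` and `j + 1` keeps the labeling
admissible; hence a vertex with a neighbour labelled below `k` can be carried down to label `k`
without touching the labels below `k`. Two labelings rooted at `r` are then joined by making the
first agree with the second on labels `1, 2, …` in turn, and every admissible labeling reaches one
rooted at `o` by carrying the label `0` along a path to `o`: lower the next vertex to label `1`,
then swap the labels `0` and `1`. Breadth-first labelings show that rooted labelings exist.
-/

/-- An admissible labeling of a graph `F` on `n` vertices: a bijection `φ : V(F) ≃ Fin n`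
such that for every `1 ≤ i ≤ n`, the vertices with labels `< i` span a connected subgraph. -/
def AdmissibleLabeling {V : Type*} [Fintype V] (F : SimpleGraph V)
    (φ : V ≃ Fin (Fintype.card V)) : Prop :=
  ∀ i : ℕ, 1 ≤ i → i ≤ Fintype.card V →
    (F.induce {v : V | (φ v : ℕ) < i}).Connected

/-- Two labelings are related if one is obtained from the other by swapping the
labels `i - 1` and `i` for some `1 ≤ i < n`. -/
def LabelSwapRel {V : Type*} {n : ℕ} (φ ψ : V ≃ Fin n) : Prop :=
  ∃ (i : ℕ) (_ : 1 ≤ i) (h2 : i < n),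
    ψ = φ.trans (Equiv.swap ⟨i - 1, by omega⟩ ⟨i, h2⟩)

/-- The graph whose vertices are the admissible labelings of `F`, two labelings being
adjacent iff they differ by a swap of two consecutive labels. -/
def labelGraph {V : Type*} [Fintype V] (F : SimpleGraph V) :
    SimpleGraph {φ : V ≃ Fin (Fintype.card V) // AdmissibleLabeling F φ} :=
  SimpleGraph.fromRel fun φ ψ => LabelSwapRel φ.1 ψ.1

namespace SimpleGraph

variable {V : Type*} {G : SimpleGraph V}

lemma induce_singleton_connected (v : V) : (G.induce {v}).Connected := by
  rw [induce_singleton_eq_top]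
  exact connected_top

lemma induce_insert_connected_of_adj {s : Set V} (hs : (G.induce s).Connected) {u w : V}
    (hu : u ∈ s) (hwu : G.Adj w u) : (G.induce (insert w s)).Connected := by
  simpa [Set.singleton_union] using
    connected_induce_union (induce_singleton_connected w).preconnected hs.preconnected rfl hu hwu

lemma exists_adj_of_induce_insert_connected {s : Set V} (hs : s.Nonempty) {w : V} (hw : w ∉ s)
    (hc : (G.induce (insert w s)).Connected) : ∃ u ∈ s, G.Adj w u := by
  obtain ⟨v, hv⟩ := hs
  obtain ⟨p⟩ := hc ⟨w, Set.mem_insert _ _⟩ ⟨v, Set.mem_insert_of_mem _ hv⟩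
  cases p with
  | nil => exact absurd hv (by simpa using hw)
  | @cons _ u _ hwu _ =>
    exact ⟨u, u.2.resolve_left fun h => hwu.ne (Subtype.ext h.symm), hwu⟩

lemma Reachable.exists_adj_dist_lt {o v : V} (h : G.Reachable v o) (hne : v ≠ o) :
    ∃ u, G.Adj v u ∧ G.dist o u < G.dist o v := by
  obtain ⟨p, hp⟩ := h.exists_walk_length_eq_dist
  cases p with
  | nil => exact absurd rfl hne
  | @cons _ u _ hvu q =>
    refine ⟨u, hvu, ?_⟩
    have := dist_le q
    rw [dist_comm (u := o), dist_comm (u := o)]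
    simp only [Walk.length_cons] at hp
    omega

lemma induce_connected_of_exists_adj_lt (f : V → ℕ) {s : Set V} {o : V} (ho : o ∈ s)
    (h : ∀ v ∈ s, v ≠ o → ∃ u ∈ s, G.Adj v u ∧ f u < f v) : (G.induce s).Connected := by
  have hreach : ∀ n, ∀ v (hv : v ∈ s), f v = n → (G.induce s).Reachable ⟨v, hv⟩ ⟨o, ho⟩ := by
    intro n
    induction n using Nat.strong_induction_on with
    | _ n ih =>
      rintro v hv rfl
      by_cases hvo : v = o
      · subst hvo; rfl
      obtain ⟨u, hu, hvu, hlt⟩ := h v hv hvo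
      have hvu' : (G.induce s).Adj ⟨v, hv⟩ ⟨u, hu⟩ := hvu
      exact hvu'.reachable.trans (ih _ hlt u hu rfl)
  have : Nonempty s := ⟨⟨o, ho⟩⟩
  exact ⟨fun x y => (hreach _ x x.2 rfl).trans (hreach _ y y.2 rfl).symm⟩

end SimpleGraph

lemma exists_equiv_fin_lt_of_lt {α : Type*} [Fintype α] (f : α → ℕ) :
    ∃ e : α ≃ Fin (Fintype.card α), ∀ a b, f a < f b → e a < e b := by
  let g := f ∘ (Fintype.equivFin α).symm
  refine ⟨(Fintype.equivFin α).trans (Tuple.sort g).symm, fun a b hab => ?_⟩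
  refine (Tuple.monotone_sort g).reflect_lt ?_
  simpa [g] using hab

section Labels

variable {V : Type*} {n : ℕ}

def labelPrefix (φ : V ≃ Fin n) (i : ℕ) : Set V := {v | (φ v : ℕ) < i}

def swapLabels (φ : V ≃ Fin n) (j : ℕ) (h : j + 1 < n) : V ≃ Fin n :=
  φ.trans (Equiv.swap ⟨j, by omega⟩ ⟨j + 1, h⟩)

lemma labelPrefix_zero (φ : V ≃ Fin n) : labelPrefix φ 0 = ∅ :=
  Set.eq_empty_of_forall_notMem fun _ => Nat.not_lt_zero _

lemma labelPrefix_succ (φ : V ≃ Fin n) {i : ℕ} (h : i < n) :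
    labelPrefix φ (i + 1) = insert (φ.symm ⟨i, h⟩) (labelPrefix φ i) := by
  ext v
  simp only [labelPrefix, Set.mem_ofPred_eq, Set.mem_insert_iff, Equiv.eq_symm_apply, Fin.ext_iff]
  omega

lemma swapLabels_apply_of_ne {φ : V ≃ Fin n} {j : ℕ} (h : j + 1 < n) {v : V}
    (hj : (φ v : ℕ) ≠ j) (hj' : (φ v : ℕ) ≠ j + 1) : swapLabels φ j h v = φ v :=
  Equiv.swap_apply_of_ne_of_ne (fun e => hj (congrArg Fin.val e))
    (fun e => hj' (congrArg Fin.val e))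

lemma swapLabels_apply_of_eq_succ {φ : V ≃ Fin n} {j : ℕ} (h : j + 1 < n) {v : V}
    (hv : (φ v : ℕ) = j + 1) : (swapLabels φ j h v : ℕ) = j := by
  rw [swapLabels, Equiv.trans_apply, show φ v = ⟨j + 1, h⟩ from Fin.ext hv,
    Equiv.swap_apply_right]

lemma labelPrefix_swapLabels_of_ne (φ : V ≃ Fin n) {j : ℕ} (h : j + 1 < n) {i : ℕ}
    (hi : i ≠ j + 1) : labelPrefix (swapLabels φ j h) i = labelPrefix φ i := by
  ext v
  simp only [labelPrefix, swapLabels, Set.mem_ofPred_eq, Equiv.trans_apply, Equiv.swap_apply_def]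
  split_ifs with h₁ h₂
  · rw [h₁]; simp only; omega
  · rw [h₂]; simp only; omega
  · rfl

lemma labelPrefix_swapLabels_succ (φ : V ≃ Fin n) {j : ℕ} (h : j + 1 < n) :
    labelPrefix (swapLabels φ j h) (j + 1) = insert (φ.symm ⟨j + 1, h⟩) (labelPrefix φ j) := by
  rw [labelPrefix_succ _ (by omega), labelPrefix_swapLabels_of_ne φ h (by omega)]
  congr 1
  simp [swapLabels, Equiv.swap_apply_left]

end Labels

section LabelGraph

variable {V : Type*} [Fintype V] {F : SimpleGraph V}

lemma AdmissibleLabeling.swapLabels {φ : V ≃ Fin (Fintype.card V)} (hφ : AdmissibleLabeling F φ)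
    {j : ℕ} (h : j + 1 < Fintype.card V)
    (hc : (F.induce (insert (φ.symm ⟨j + 1, h⟩) (labelPrefix φ j))).Connected) :
    AdmissibleLabeling F (swapLabels φ j h) := by
  intro i hi hin
  change (F.induce (labelPrefix _ i)).Connected
  by_cases hij : i = j + 1
  · rwa [hij, labelPrefix_swapLabels_succ]
  · rw [labelPrefix_swapLabels_of_ne φ h hij]
    exact hφ i hi hin

lemma labelGraph_adj_swapLabels {φ : V ≃ Fin (Fintype.card V)} (hφ : AdmissibleLabeling F φ)
    {j : ℕ} (h : j + 1 < Fintype.card V) (hφ' : AdmissibleLabeling F (swapLabels φ j h)) :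
    (labelGraph F).Adj ⟨φ, hφ⟩ ⟨swapLabels φ j h, hφ'⟩ := by
  refine (SimpleGraph.fromRel_adj _ _ _).2 ⟨fun e => ?_, .inl ⟨j + 1, by omega, h, rfl⟩⟩
  have := congrArg (fun χ : {φ // AdmissibleLabeling F φ} => (χ.1 (φ.symm ⟨j, by omega⟩) : ℕ)) e
  simp [swapLabels, Equiv.swap_apply_left] at this

def rootedLabelGraph (F : SimpleGraph V) (r : V) :
    SimpleGraph {χ : {φ : V ≃ Fin (Fintype.card V) // AdmissibleLabeling F φ} |
      (χ.1 r : ℕ) = 0} :=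
  (labelGraph F).induce {χ | (χ.1 r : ℕ) = 0}

/-- Each swap on the way down stays admissible: the new prefix `insert w (labelPrefix φ j)` is
connected through the neighbour `u`, whose label is never touched. -/
lemma exists_rootedLabelGraph_reachable_lower {r w u : V} (hwu : F.Adj w u) {k : ℕ} (hk : 1 ≤ k)
    {φ : V ≃ Fin (Fintype.card V)} (hφ : AdmissibleLabeling F φ) (hr : (φ r : ℕ) = 0)
    (hu : (φ u : ℕ) < k) (hkw : k ≤ φ w) :
    ∃ (ψ : V ≃ Fin (Fintype.card V)) (hψ : AdmissibleLabeling F ψ) (hψr : (ψ r : ℕ) = 0),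
      (ψ w : ℕ) = k ∧ (∀ v, (φ v : ℕ) < k → ψ v = φ v) ∧
      (rootedLabelGraph F r).Reachable ⟨⟨φ, hφ⟩, hr⟩ ⟨⟨ψ, hψ⟩, hψr⟩ := by
  induction ht : (φ w : ℕ) - k generalizing φ with
  | zero => exact ⟨φ, hφ, hr, by omega, fun _ _ => rfl, .rfl⟩
  | succ t ih =>
    have h : k + t + 1 < Fintype.card V := by have := (φ w).isLt; omega
    have hwφ : φ.symm ⟨k + t + 1, h⟩ = w := φ.symm_apply_eq.2 (Fin.ext (by simp; omega))
    have hφ₁ : AdmissibleLabeling F (swapLabels φ (k + t) h) := by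
      refine hφ.swapLabels h ?_
      rw [hwφ]
      exact SimpleGraph.induce_insert_connected_of_adj (hφ _ (by omega) (by omega))
        (show (φ u : ℕ) < k + t by omega) hwu
    have hfix : ∀ v, (φ v : ℕ) < k → swapLabels φ (k + t) h v = φ v := fun v hv =>
      swapLabels_apply_of_ne h (by omega) (by omega)
    have hφ₁w : (swapLabels φ (k + t) h w : ℕ) = k + t := swapLabels_apply_of_eq_succ h (by omega)
    have hφ₁r : (swapLabels φ (k + t) h r : ℕ) = 0 := by rw [hfix r (by omega), hr]
    have hadj : (rootedLabelGraph F r).Adj ⟨⟨φ, hφ⟩, hr⟩ ⟨⟨_, hφ₁⟩, hφ₁r⟩ :=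
      labelGraph_adj_swapLabels hφ h hφ₁
    obtain ⟨ψ, hψ, hψr, hψw, hψφ, hreach⟩ := ih hφ₁ hφ₁r (by rwa [hfix u hu]) (by omega) (by omega)
    refine ⟨ψ, hψ, hψr, hψw, fun v hv => (hψφ v (by rwa [hfix v hv])).trans (hfix v hv), ?_⟩
    exact hadj.reachable.trans hreach

/-- By admissibility of `ψ`, the vertex `w` that `ψ` labels `k` has a neighbour labelled below `k`,
so `w` can be lowered to label `k` in `φ`. -/
lemma exists_rootedLabelGraph_reachable_agree_succ {r : V} {φ ψ : V ≃ Fin (Fintype.card V)}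
    (hφ : AdmissibleLabeling F φ) (hψ : AdmissibleLabeling F ψ) (hφr : (φ r : ℕ) = 0)
    (hψr : (ψ r : ℕ) = 0) {k : ℕ} (hk : 1 ≤ k) (hkn : k < Fintype.card V)
    (hag : ∀ v, (ψ v : ℕ) < k → φ v = ψ v) :
    ∃ (φ' : V ≃ Fin (Fintype.card V)) (hφ' : AdmissibleLabeling F φ') (hφ'r : (φ' r : ℕ) = 0),
      (∀ v, (ψ v : ℕ) < k + 1 → φ' v = ψ v) ∧
      (rootedLabelGraph F r).Reachable ⟨⟨φ, hφ⟩, hφr⟩ ⟨⟨φ', hφ'⟩, hφ'r⟩ := by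
  set w := ψ.symm ⟨k, hkn⟩
  have hψw : (ψ w : ℕ) = k := by simp [w]
  have hkw : k ≤ φ w := by
    by_contra! hlt
    set v := ψ.symm ⟨φ w, by omega⟩
    have hψv : (ψ v : ℕ) = φ w := by simp [v]
    have hvw : v = w := φ.injective (Fin.ext (by rw [hag v (by omega), hψv]))
    rw [hvw] at hψv
    omega
  obtain ⟨u, hu, hwu⟩ := SimpleGraph.exists_adj_of_induce_insert_connected
    (s := labelPrefix ψ k) ⟨r, show (ψ r : ℕ) < k by omega⟩
    (show ¬ (ψ w : ℕ) < k by omega) (by rw [← labelPrefix_succ]; exact hψ (k + 1) (by omega) hkn)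
  have hu' : (φ u : ℕ) < k := by rw [hag u hu]; exact hu
  obtain ⟨φ', hφ', hφ'r, hφ'w, hφ'φ, hreach⟩ :=
    exists_rootedLabelGraph_reachable_lower hwu hk hφ hφr hu' hkw
  refine ⟨φ', hφ', hφ'r, fun v hv => ?_, hreach⟩
  rcases Nat.lt_succ_iff_lt_or_eq.mp hv with hv | hv
  · rw [hφ'φ v (by rw [hag v hv]; exact hv), hag v hv]
  · obtain rfl : v = w := (ψ.symm_apply_eq.2 (Fin.ext hv.symm)).symm
    exact Fin.ext (by omega)

lemma rootedLabelGraph_reachable_of_agree {r : V} {φ ψ : V ≃ Fin (Fintype.card V)}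
    (hφ : AdmissibleLabeling F φ) (hψ : AdmissibleLabeling F ψ) (hφr : (φ r : ℕ) = 0)
    (hψr : (ψ r : ℕ) = 0) {k : ℕ} (hk : 1 ≤ k) (hag : ∀ v, (ψ v : ℕ) < k → φ v = ψ v) :
    (rootedLabelGraph F r).Reachable ⟨⟨φ, hφ⟩, hφr⟩ ⟨⟨ψ, hψ⟩, hψr⟩ := by
  induction ht : Fintype.card V - k generalizing φ k with
  | zero =>
    obtain rfl : φ = ψ := Equiv.ext fun v => hag v (by have := (ψ v).isLt; omega)
    rfl
  | succ t ih =>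
    obtain ⟨φ', hφ', hφ'r, hag', hreach⟩ :=
      exists_rootedLabelGraph_reachable_agree_succ hφ hψ hφr hψr hk (by omega) hag
    exact hreach.trans (ih hφ' hφ'r (by omega) hag' (by omega))

lemma rootedLabelGraph_preconnected (r : V) : (rootedLabelGraph F r).Preconnected := by
  rintro ⟨⟨φ, hφ⟩, hφr : (φ r : ℕ) = 0⟩ ⟨⟨ψ, hψ⟩, hψr : (ψ r : ℕ) = 0⟩
  refine rootedLabelGraph_reachable_of_agree hφ hψ hφr hψr le_rfl fun v hv => ?_
  obtain rfl : v = r := ψ.injective (Fin.ext (by omega))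
  exact Fin.ext (by omega)

/-- Breadth-first labelings, i.e. labelings increasing with the distance to `o`, are admissible. -/
lemma exists_admissibleLabeling (hF : F.Connected) (o : V) :
    ∃ φ : V ≃ Fin (Fintype.card V), AdmissibleLabeling F φ ∧ (φ o : ℕ) = 0 := by
  obtain ⟨φ, hφ⟩ := exists_equiv_fin_lt_of_lt (F.dist o)
  have hmin : ∀ v, v ≠ o → φ o < φ v := fun v hv =>
    hφ o v (by rw [SimpleGraph.dist_self]; exact hF.pos_dist_of_ne hv.symm)
  have ho : (φ o : ℕ) = 0 := by
    by_contra ho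
    have hv : (φ (φ.symm ⟨0, by omega⟩) : ℕ) = 0 := by simp
    have := hmin (φ.symm ⟨0, by omega⟩) fun h => ho (h ▸ hv)
    rw [Fin.lt_def] at this
    omega
  refine ⟨φ, fun i hi _ => ?_, ho⟩
  refine SimpleGraph.induce_connected_of_exists_adj_lt (F.dist o)
    (show (φ o : ℕ) < i by omega) fun v hv hvo => ?_
  obtain ⟨u, hvu, hlt⟩ := (hF v o).exists_adj_dist_lt hvo
  exact ⟨u, lt_trans (Fin.lt_def.1 (hφ u v hlt)) hv, hvu, hlt⟩

/-- Moving label `0` across an edge `ab`: bring `b` down to label `1` while `a` keeps label `0`,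
then swap the labels `0` and `1`. -/
lemma exists_labelGraph_reachable_of_adj {a b : V} (hab : F.Adj a b)
    {φ : V ≃ Fin (Fintype.card V)} (hφ : AdmissibleLabeling F φ) (ha : (φ a : ℕ) = 0) :
    ∃ (ψ : V ≃ Fin (Fintype.card V)) (hψ : AdmissibleLabeling F ψ),
      (ψ b : ℕ) = 0 ∧ (labelGraph F).Reachable ⟨φ, hφ⟩ ⟨ψ, hψ⟩ := by
  have hb : 1 ≤ (φ b : ℕ) := by
    by_contra! hb
    exact hab.ne (φ.injective (Fin.ext (by omega)))
  obtain ⟨ψ, hψ, _, hψb, -, hreach⟩ :=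
    exists_rootedLabelGraph_reachable_lower hab.symm le_rfl hφ ha (by omega) hb
  have h : 0 + 1 < Fintype.card V := by have := (ψ b).isLt; omega
  have hψ' : AdmissibleLabeling F (swapLabels ψ 0 h) :=
    hψ.swapLabels h (by
      rw [labelPrefix_zero, insert_empty_eq]
      exact SimpleGraph.induce_singleton_connected _)
  refine ⟨_, hψ', swapLabels_apply_of_eq_succ h hψb, ?_⟩
  exact (hreach.map (SimpleGraph.Embedding.induce _).toHom).trans
    (labelGraph_adj_swapLabels hψ h hψ').reachable

lemma exists_labelGraph_reachable_of_walk {a o : V} (p : F.Walk a o)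
    {φ : V ≃ Fin (Fintype.card V)} (hφ : AdmissibleLabeling F φ) (ha : (φ a : ℕ) = 0) :
    ∃ (ψ : V ≃ Fin (Fintype.card V)) (hψ : AdmissibleLabeling F ψ),
      (ψ o : ℕ) = 0 ∧ (labelGraph F).Reachable ⟨φ, hφ⟩ ⟨ψ, hψ⟩ := by
  induction p generalizing φ with
  | nil => exact ⟨φ, hφ, ha, .rfl⟩
  | cons hab _ ih =>
    obtain ⟨ψ, hψ, hψb, hreach⟩ := exists_labelGraph_reachable_of_adj hab hφ ha
    obtain ⟨χ, hχ, hχo, hreach'⟩ := ih hψ hψb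
    exact ⟨χ, hχ, hχo, hreach.trans hreach'⟩

lemma rootedLabelGraph_connected (hF : F.Connected) (r : V) :
    (rootedLabelGraph F r).Connected :=
  have ⟨φ, hφ, hφr⟩ := exists_admissibleLabeling hF r
  @SimpleGraph.Connected.mk _ _ (rootedLabelGraph_preconnected r) ⟨⟨⟨φ, hφ⟩, hφr⟩⟩

lemma exists_labelGraph_reachable_rooted (hF : F.Connected) (o : V)
    (φ : {φ : V ≃ Fin (Fintype.card V) // AdmissibleLabeling F φ}) :
    ∃ ψ : {χ : {φ // AdmissibleLabeling F φ} | (χ.1 o : ℕ) = 0},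
      (labelGraph F).Reachable φ ψ := by
  obtain ⟨φ, hφ⟩ := φ
  obtain ⟨p⟩ := hF (φ.symm ⟨0, Fintype.card_pos_iff.2 ⟨o⟩⟩) o
  obtain ⟨ψ, hψ, hψo, hreach⟩ := exists_labelGraph_reachable_of_walk p hφ (by simp)
  exact ⟨⟨⟨ψ, hψ⟩, hψo⟩, hreach⟩

lemma labelGraph_connected (hF : F.Connected) : (labelGraph F).Connected := by
  obtain ⟨o⟩ := hF.nonempty
  have hrooted := rootedLabelGraph_connected hF o
  obtain ⟨⟨φ₀, _⟩⟩ := hrooted.nonempty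
  refine @SimpleGraph.Connected.mk _ _ (fun φ ψ => ?_) ⟨φ₀⟩
  obtain ⟨φ', hφφ'⟩ := exists_labelGraph_reachable_rooted hF o φ
  obtain ⟨ψ', hψψ'⟩ := exists_labelGraph_reachable_rooted hF o ψ
  exact (hφφ'.trans ((hrooted φ' ψ').map (SimpleGraph.Embedding.induce _).toHom)).trans hψψ'.symm

end LabelGraph

/-- For a connected graph `F`: (a) the graph of admissible labelings of
`F` is connected; (b) for any fixed vertex `o`, the admissible labelings `φ` with
`φ(o) = 0` span a connected subgraph. -/
theorem stmt17 {V : Type*} [Fintype V] (F : SimpleGraph V) (hF : F.Connected) (o : V) :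
    (labelGraph F).Connected ∧
    ((labelGraph F).induce
        {φ : {φ : V ≃ Fin (Fintype.card V) // AdmissibleLabeling F φ} |
          (φ.1 o : ℕ) = 0}).Connected :=
  ⟨labelGraph_connected hF, rootedLabelGraph_connected hF o⟩
end

section
/- For any family 𝒢 of admissible pairs (G,d) and any ε > 0, there exists a number N such that for every (G,d) ∈ 𝒢 there exists (G',d') ∈ 𝒢 with v(G') ≤ N and d' ≤ N, such that |t(F,G,d) − t(F,G',d')| < ε for every graph F with v(F) ≤ 1/ε. -/
open Filter Topology

/-!
Every homomorphism density of a graph `F` into an admissible pair lies in `[0, 1]`: a homomorphism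
is fixed by the image of one root per component of `F` (at most `v(G)` choices each) and then,
along a spanning forest, by one of at most `d` neighbours for every other vertex. Hence the
density profiles of the pairs of `𝒢` on the finitely many graphs with at most `1/ε` vertices lie
in a cube, which is totally bounded: finitely many members of `𝒢` form an `ε`-net, and `N`
bounds their sizes and degree bounds.
-/

open SimpleGraph Set

namespace SimpleGraph

variable {α β : Type*} {F : SimpleGraph α}

/-- Parent pointers of a breadth-first spanning forest rooted at `range r`. -/
lemma exists_parent {r : F.ConnectedComponent → α}
    (hr : ∀ c, F.connectedComponentMk (r c) = c) :
    ∃ par : α → α, ∀ v ∉ range r, F.Adj v (par v) ∧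
      F.dist (par v) (r (F.connectedComponentMk (par v))) <
        F.dist v (r (F.connectedComponentMk v)) := by
  have hroot (v : α) (hv : v ∉ range r) :
      ∃ w, F.Adj v w ∧ F.dist w (r (F.connectedComponentMk w)) <
        F.dist v (r (F.connectedComponentMk v)) := by
    have hne : v ≠ r (F.connectedComponentMk v) := fun h ↦ hv ⟨_, h.symm⟩
    have hreach : F.Reachable v (r (F.connectedComponentMk v)) :=
      ConnectedComponent.exact (hr _).symm
    obtain ⟨p, hp⟩ := exists_walk_of_dist_ne_zero
      (dist_ne_zero_iff_ne_and_reachable.2 ⟨hne, hreach⟩)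
    obtain ⟨w, hvw, q, rfl⟩ := Walk.exists_eq_cons_of_ne hne p
    refine ⟨w, hvw, ?_⟩
    rw [← ConnectedComponent.connectedComponentMk_eq_of_adj hvw]
    have := dist_le q
    simp only [Walk.length_cons] at hp
    omega
  choose! par hpar using hroot
  exact ⟨par, hpar⟩

theorem homCount_le [Finite α] [Finite β] (F : SimpleGraph α) (G : SimpleGraph β) {D : ℕ}
    (hD : ∀ x, vdegree G x ≤ D) :
    homCount F G ≤ Nat.card β ^ numComponents F * D ^ (Nat.card α - numComponents F) := by
  set r : F.ConnectedComponent → α := Quot.out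
  have hr : ∀ c, F.connectedComponentMk (r c) = c := Quot.out_eq
  obtain ⟨par, hpar⟩ := exists_parent hr
  let label (x : β) : G.neighborSet x ↪ Fin D :=
    (Finite.equivFin _).toEmbedding.trans (Fin.castLEEmb (hD x))
  have label_inj {x y : β} (hxy : x = y) {a : G.neighborSet x} {b : G.neighborSet y}
      (h : label x a = label y b) : (a : β) = b := by
    subst hxy
    exact congrArg Subtype.val ((label x).injective h)
  let code (f : F →g G) : (F.ConnectedComponent → β) × (↥(range r)ᶜ → Fin D) :=
    (f ∘ r, fun v ↦ label (f (par v)) ⟨f v, (f.map_adj (hpar v v.2).1).symm⟩)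
  have hcode : Function.Injective code := by
    intro f g hfg
    have hroots : ∀ c, f (r c) = g (r c) := congrFun (congrArg Prod.fst hfg)
    have hlabels := congrArg Prod.snd hfg
    refine DFunLike.ext f g fun v ↦ ?_
    induction h : F.dist v (r (F.connectedComponentMk v)) using Nat.strong_induction_on
      generalizing v with
    | _ k ih =>
      by_cases hv : v ∈ range r
      · obtain ⟨c, rfl⟩ := hv
        exact hroots c
      · exact label_inj (ih _ (h ▸ (hpar v hv).2) _ rfl) (congrFun hlabels ⟨v, hv⟩)
  have hcomponents : (range r).ncard = numComponents F :=
    ncard_range_of_injective (Function.LeftInverse.injective hr)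
  calc homCount F G ≤ Nat.card ((F.ConnectedComponent → β) × (↥(range r)ᶜ → Fin D)) :=
          Nat.card_le_card_of_injective code hcode
    _ = _ := by
      rw [Nat.card_prod, Nat.card_fun, Nat.card_fun, Nat.card_coe_set_eq, ncard_compl,
        hcomponents, Nat.card_fin]
      rfl

end SimpleGraph

section Density

variable {α β : Type*} (F : SimpleGraph α) {G : SimpleGraph β} {d : ℝ}

lemma homDensity_nonneg (hd : 0 ≤ d) : 0 ≤ homDensity F G d := by
  unfold homDensity
  positivity

lemma homDensity_le_one [Finite α] [Finite β] (hG : Admissible G d) :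
    homDensity F G d ≤ 1 := by
  obtain ⟨hd, hdeg⟩ := hG
  have hcount : (homCount F G : ℝ) ≤ (Nat.card β : ℝ) ^ numComponents F *
      (⌊d⌋₊ : ℝ) ^ (Nat.card α - numComponents F) := by
    exact_mod_cast homCount_le F G fun x ↦ Nat.le_floor (hdeg x)
  refine div_le_one_of_le₀ (hcount.trans ?_) (by positivity)
  gcongr
  exact Nat.floor_le (zero_le_one.trans hd)

end Density

lemma exists_finite_net {X Y : Type*} [PseudoMetricSpace Y] [ProperSpace Y] {f : X → Y}
    {s : Set X} (hs : Bornology.IsBounded (f '' s)) {ε : ℝ} (hε : 0 < ε) :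
    ∃ t ⊆ s, t.Finite ∧ ∀ x ∈ s, ∃ y ∈ t, dist (f x) (f y) < ε := by
  have htb : TotallyBounded (f '' s) :=
    hs.isCompact_closure.totallyBounded.subset subset_closure
  obtain ⟨t, hts, ht, hnet⟩ :=
    exists_subset_image_finite_and.1 (Metric.finite_approx_of_totallyBounded htb ε hε)
  refine ⟨t, hts, ht, fun x hx ↦ ?_⟩
  obtain ⟨_, ⟨y, hy, rfl⟩, hxy⟩ := mem_iUnion₂.1 (hnet (mem_image_of_mem f hx))
  exact ⟨y, hy, hxy⟩

/-- For any family `𝒢` of admissible pairs (given by a membership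
predicate `P`) and any `ε > 0`, there is `N` such that every `(G,d) ∈ 𝒢` is `ε`-close, in
all homomorphism densities of graphs on at most `1/ε` vertices, to some `(G',d') ∈ 𝒢` with
`v(G') ≤ N` and `d' ≤ N`. -/
theorem stmt19 (P : (n : ℕ) → SimpleGraph (Fin n) → ℝ → Prop)
    (hP : ∀ n G d, P n G d → 1 ≤ n ∧ Admissible G d)
    (ε : ℝ) (hε : 0 < ε) :
    ∃ N : ℕ, ∀ (n : ℕ) (G : SimpleGraph (Fin n)) (d : ℝ), P n G d →
      ∃ (n' : ℕ) (G' : SimpleGraph (Fin n')) (d' : ℝ), P n' G' d' ∧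
        n' ≤ N ∧ d' ≤ (N : ℝ) ∧
        ∀ (m : ℕ) (F : SimpleGraph (Fin m)), (m : ℝ) ≤ 1 / ε →
          |homDensity F G d - homDensity F G' d'| < ε := by
  let profile (x : Σ n, SimpleGraph (Fin n) × ℝ)
      (F : Σ m : Fin (⌊1 / ε⌋₊ + 1), SimpleGraph (Fin m)) : ℝ :=
    homDensity F.2 x.2.1 x.2.2
  let family : Set (Σ n, SimpleGraph (Fin n) × ℝ) := {x | P x.1 x.2.1 x.2.2}
  have hbounded : Bornology.IsBounded (profile '' family) := by
    refine (Metric.isBounded_Icc 0 1).subset ?_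
    rintro _ ⟨x, hx, rfl⟩
    have hadm := (hP _ _ _ hx).2
    exact ⟨fun F ↦ homDensity_nonneg _ (zero_le_one.trans hadm.1),
      fun F ↦ homDensity_le_one _ hadm⟩
  obtain ⟨t, htP, ht, hnet⟩ := exists_finite_net hbounded hε
  obtain ⟨N, hN⟩ := (ht.image fun x ↦ max x.1 ⌈x.2.2⌉₊).bddAbove
  refine ⟨N, fun n G d hG ↦ ?_⟩
  obtain ⟨⟨n', G', d'⟩, hy, hclose⟩ := hnet ⟨n, G, d⟩ hG
  have hyN : max n' ⌈d'⌉₊ ≤ N := hN (mem_image_of_mem _ hy)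
  refine ⟨n', G', d', htP hy, le_of_max_le_left hyN,
    (Nat.le_ceil d').trans (by exact_mod_cast le_of_max_le_right hyN), fun m F hm ↦ ?_⟩
  have hmM : m < ⌊1 / ε⌋₊ + 1 := Nat.lt_succ_of_le (Nat.le_floor hm)
  rw [← Real.dist_eq]
  exact (dist_pi_lt_iff hε).1 hclose ⟨⟨m, hmM⟩, F⟩
end
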